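/- arXiv:0803.4516 — 3 statements merged into one kernel-verified Lean document; each statement's English description precedes it below -/
import Mathlib

section
/- Let n ≥ 9, m = ⌊√n⌋, S = {i² : 0 ≤ i ≤ m} ∪ {2}, and P(x) = 2·(−1)^{n−m−1}·(m!²/n!)·∏_{i ∈ [n]∖S} (x − i). Then C(n,2)·|P(2)| ≤ 12. -/
/-!
At `x = 2` the full product `∏_{i ≤ n, i ≠ 2} |2 - i|` equals `2! (n - 2)!`, and its part over the
squares is `B = ∏_{j ≤ m} |2 - j²|`; with `n! = C(n, 2) · 2! · (n - 2)!` this gives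
`C(n, 2) |P(2)| = 2 m!² / B`. Since `|2 - j²| > (j + 2)(j - 2)` for `j ≥ 3`, the product `B` is at
least `(m + 2)! (m - 2)! / 6`, and `m!² ≤ (m + 2)! (m - 2)!` because `m!/(m - 2)! = m(m - 1)` is at
most `(m + 2)!/m! = (m + 2)(m + 1)`.
-/

open Finset Nat

theorem Nat.factorial_sq_le_factorial_add_mul_factorial_sub {m k : ℕ} (hk : k ≤ m) :
    m ! ^ 2 ≤ (m + k)! * (m - k)! := by
  have hdesc_le_asc : m.descFactorial k ≤ (m + 1).ascFactorial k :=
    calc m.descFactorial k ≤ m ^ k := m.descFactorial_le_pow k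
      _ ≤ (m + 1) ^ k := Nat.pow_le_pow_left m.le_succ k
      _ ≤ (m + 1).ascFactorial k := Nat.pow_succ_le_ascFactorial _ k
  calc m ! ^ 2 = m ! * ((m - k)! * m.descFactorial k) := by
        rw [factorial_mul_descFactorial hk, sq]
    _ ≤ m ! * ((m - k)! * (m + 1).ascFactorial k) := by gcongr
    _ = (m + k)! * (m - k)! := by rw [← factorial_mul_ascFactorial]; ring

theorem Nat.sq_ne_two (j : ℕ) : j ^ 2 ≠ 2 :=
  fun h => Irreducible.not_isSquare Nat.prime_two ⟨j, h ▸ sq j⟩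

theorem image_sq_range_subset_erase_two {m n : ℕ} (hmn : m ^ 2 ≤ n) :
    (range (m + 1)).image (fun i : ℕ => i ^ 2) ⊆ (range (n + 1)).erase 2 := by
  intro x hx
  obtain ⟨j, hj, rfl⟩ := mem_image.1 hx
  have hjn : j ^ 2 ≤ n := (Nat.pow_le_pow_left (mem_range_succ_iff.1 hj) 2).trans hmn
  exact mem_erase.2 ⟨j.sq_ne_two, mem_range_succ_iff.2 hjn⟩

section OrderedRing

variable {R : Type*} [CommRing R] [LinearOrder R] [IsStrictOrderedRing R]

theorem prod_range_abs_sub (a : ℕ) : ∏ i ∈ range a, |(a : R) - i| = a ! := by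
  induction a with
  | zero => simp
  | succ a ih =>
    rw [prod_range_succ', factorial_succ, mul_comm]
    push_cast
    rw [← ih, sub_zero, abs_of_pos (by positivity)]
    congr 1
    refine prod_congr rfl fun i _ => ?_
    ring_nf

theorem prod_range_erase_abs_sub {a n : ℕ} (ha : a ≤ n) :
    ∏ i ∈ (range (n + 1)).erase a, |(a : R) - i| = a ! * (n - a)! := by
  induction n, ha using Nat.le_induction with
  | base => simp [range_add_one, prod_range_abs_sub]
  | succ n ha ih =>
    have hlt : (a : R) < (n + 1 : ℕ) := by exact_mod_cast Nat.lt_succ_of_le ha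
    rw [range_add_one, erase_insert_of_ne (by omega), prod_insert (by simp), ih,
      Nat.sub_add_comm ha, factorial_succ, abs_sub_comm, abs_of_pos (sub_pos.2 hlt)]
    push_cast [Nat.cast_sub ha]
    ring

theorem prod_abs_two_sub_sdiff_mul_prod_abs_two_sub_sq {m n : ℕ} (hmn : m ^ 2 ≤ n) (hn : 2 ≤ n) :
    (∏ i ∈ range (n + 1) \ ((range (m + 1)).image (fun i : ℕ => i ^ 2) ∪ {2}), |2 - (i : R)|) *
      ∏ j ∈ range (m + 1), |2 - (j : R) ^ 2| = 2 * (n - 2)! := by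
  have hsquares : ∏ j ∈ range (m + 1), |2 - (j : R) ^ 2| =
      ∏ i ∈ (range (m + 1)).image (fun i : ℕ => i ^ 2), |2 - (i : R)| := by
    rw [prod_image (Nat.pow_left_injective two_ne_zero).injOn]
    push_cast
    rfl
  have hsdiff : range (n + 1) \ ((range (m + 1)).image (fun i : ℕ => i ^ 2) ∪ {2}) =
      (range (n + 1)).erase 2 \ (range (m + 1)).image (fun i : ℕ => i ^ 2) := by
    ext
    simp only [mem_sdiff, mem_union, mem_singleton, mem_erase]
    tauto
  rw [hsquares, hsdiff, prod_sdiff (image_sq_range_subset_erase_two hmn)]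
  simpa using prod_range_erase_abs_sub (R := R) (a := 2) hn

/-- The factor `(m + 3)(m - 1) = (m + 1)² - 4` of the left side is less than `|2 - (m + 1)²|`;
the constant `6` makes the case `m = 2` an equality. -/
theorem factorial_add_two_mul_factorial_sub_two_le {m : ℕ} (hm : 2 ≤ m) :
    ((m + 2)! * (m - 2)! : R) ≤ 6 * ∏ j ∈ range (m + 1), |2 - (j : R) ^ 2| := by
  induction m, hm using Nat.le_induction with
  | base => norm_num [prod_range_succ, factorial]
  | succ m hm ih =>
    have hm' : (2 : R) ≤ m := by exact_mod_cast hm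
    calc ((m + 1 + 2)! * (m + 1 - 2)! : R)
        = ((m + 3) * (m - 1)) * ((m + 2)! * (m - 2)!) := by
          rw [show m + 1 - 2 = m - 2 + 1 by omega, factorial_succ (m - 2),
            show m + 1 + 2 = m + 2 + 1 by ring, factorial_succ (m + 2)]
          push_cast [Nat.cast_sub hm]
          ring
      _ ≤ ((m + 1) ^ 2 - 2) * (6 * ∏ j ∈ range (m + 1), |2 - (j : R) ^ 2|) :=
          mul_le_mul (by nlinarith) ih (by positivity) (by nlinarith)
      _ = 6 * ∏ j ∈ range (m + 1 + 1), |2 - (j : R) ^ 2| := by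
          rw [prod_range_succ _ (m + 1), abs_of_neg (by push_cast; nlinarith)]
          push_cast
          ring

theorem factorial_sq_le_six_mul_prod_abs_two_sub_sq {m : ℕ} (hm : 2 ≤ m) :
    (m ! ^ 2 : R) ≤ 6 * ∏ j ∈ range (m + 1), |2 - (j : R) ^ 2| :=
  calc (m ! ^ 2 : R) ≤ ((m + 2)! * (m - 2)! : ℕ) := by
        exact_mod_cast Nat.factorial_sq_le_factorial_add_mul_factorial_sub hm
    _ ≤ 6 * ∏ j ∈ range (m + 1), |2 - (j : R) ^ 2| := by
        push_cast
        exact factorial_add_two_mul_factorial_sub_two_le hm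

end OrderedRing

theorem choose_two_abs_P_two_le (n : ℕ) (hn : 9 ≤ n) :
    let m := Nat.sqrt n
    let S : Finset ℕ := ((Finset.range (m + 1)).image (fun i => i ^ 2)) ∪ {2}
    let P : ℝ → ℝ := fun x =>
      2 * (-1 : ℝ) ^ (n - m - 1) * ((Nat.factorial m : ℝ) ^ 2 / Nat.factorial n) *
        ∏ i ∈ Finset.range (n + 1) \ S, (x - i)
    (n.choose 2 : ℝ) * |P 2| ≤ 12 := by
  intro m S P
  have hm : 2 ≤ m := Nat.le_sqrt'.2 (by omega)
  set B := ∏ j ∈ range (m + 1), |2 - (j : ℝ) ^ 2|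
  have hB : 0 < B :=
    prod_pos fun j _ => abs_pos.2 (sub_ne_zero.2 (by exact_mod_cast j.sq_ne_two.symm))
  have hsplit : (∏ i ∈ range (n + 1) \ S, |2 - (i : ℝ)|) * B = 2 * (n - 2)! :=
    prod_abs_two_sub_sdiff_mul_prod_abs_two_sub_sq (Nat.sqrt_le' n) (by omega)
  have hchoose : (n.choose 2 * 2 * (n - 2)! : ℝ) = n ! := by
    exact_mod_cast Nat.choose_mul_factorial_mul_factorial (by omega : 2 ≤ n)
  have hchoose_ne : (n.choose 2 : ℝ) ≠ 0 := by exact_mod_cast (Nat.choose_pos (by omega)).ne'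
  have hP2 : |P 2| = 2 * (m ! ^ 2 / n !) * ∏ i ∈ range (n + 1) \ S, |2 - (i : ℝ)| := by
    simp only [P, abs_mul, abs_pow, abs_neg, abs_one, one_pow, mul_one, abs_two, abs_prod,
      abs_of_nonneg (by positivity : (0 : ℝ) ≤ m ! ^ 2 / n !)]
  rw [hP2, eq_div_of_mul_eq hB.ne' hsplit, ← hchoose]
  field_simp
  linarith [factorial_sq_le_six_mul_prod_abs_two_sub_sq (R := ℝ) hm]
end

section
/- Let n ≥ 9, m = ⌊√n⌋, S = {i² : 0 ≤ i ≤ m} ∪ {2}, P(x) = 2·(−1)^{n−m−1}·(m!²/n!)·∏_{i ∈ [n]∖S} (x − i), and Q(k) = (−1)^k·P(k) for k ∈ [n]. Define OR: [n] → {±1} by OR(0) = 1 and OR(k) = −1 for k ≥ 1. Then ∑_{k=0}^{n} C(n,k)·Q(k)·OR(k) = 2·Q(0) = 2, and (∑_{k=0}^{n} C(n,k)·|Q(k)|) / (∑_{k=0}^{n} C(n,k)·Q(k)·OR(k)) < 14. -/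
/-!
Since `P` has degree `n - m - 1 < n`, its `n`-th finite difference vanishes, i.e.
`∑ C(n,k) (-1)^k P(k) = 0`; this is `∑ C(n,k) Q(k) = 0`, whence `Q · OR = 2 Q(0)`.

For a node `k ∈ S` the binomial coefficient cancels against the product over the non-nodes,
`C(n,k) ∏_{i ∉ S} |k - i| · ∏_{i ∈ S, i ≠ k} |k - i| = n!`, so
`C(n,k) |Q(k)| = 2 (m!)² / ∏_{i ∈ S, i ≠ k} |k - i|`, and `Q` vanishes off `S`.
At `k = 0` this is `1`, and the two signs `(-1)^(n-m-1)` cancel in `P(0)`, so `Q(0) = 1`.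
At `k = j²` with `j ≥ 1` it is at most `4 / |j² - 2| ≤ 8 / j²` because
`(m!)² ≤ (m-j)! (m+j)!`, and at `k = 2` it is `2 ∏_{3 ≤ l ≤ m} l² / (l² - 2) ≤ 6`.
Hence `‖Q‖₁ ≤ 1 + 16 + 6 = 23`, and the ratio is at most `23 / 2 < 14`.
-/

open Finset Nat Polynomial

theorem Polynomial.sum_range_neg_one_pow_mul_choose_mul_eval_eq_zero {R : Type*} [CommRing R]
    {p : R[X]} {n : ℕ} (hp : p.natDegree < n) :
    ∑ k ∈ range (n + 1), (-1) ^ k * n.choose k * p.eval (k : R) = 0 := by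
  have h := congr_fun (fwdDiff_iter_eq_zero_of_degree_lt hp) 0
  rw [fwdDiff_iter_eq_sum_shift] at h
  calc ∑ k ∈ range (n + 1), (-1) ^ k * n.choose k * p.eval (k : R)
      = (-1) ^ n * ∑ k ∈ range (n + 1), (-1) ^ (n - k) * n.choose k * p.eval (k : R) := by
        rw [mul_sum]
        refine sum_congr rfl fun k hk => ?_
        rw [← mul_assoc, ← mul_assoc, ← pow_add,
          (by grind : n + (n - k) = k + 2 * (n - k)), pow_add, pow_mul]
        simp
    _ = 0 := by simpa [zsmul_eq_mul, mul_assoc] using h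

theorem sum_range_neg_one_pow_mul_choose_mul_prod_sub_eq_zero {R ι : Type*} [CommRing R]
    (T : Finset ι) (f : ι → R) {n : ℕ} (hT : #T < n) :
    ∑ k ∈ range (n + 1), (-1) ^ k * n.choose k * ∏ t ∈ T, ((k : R) - f t) = 0 := by
  simpa [eval_prod] using sum_range_neg_one_pow_mul_choose_mul_eval_eq_zero
    (p := ∏ t ∈ T, (X - C (f t))) <| (natDegree_prod_le T _).trans_lt <|
      (sum_le_card_nsmul _ _ 1 fun t _ => natDegree_X_sub_C_le (f t)).trans_lt (by simpa using hT)

theorem sum_range_mul_ite_zero_one_neg_one {R : Type*} [CommRing R] (f : ℕ → R) (n : ℕ) :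
    ∑ k ∈ range (n + 1), f k * (if k = 0 then 1 else -1)
      = 2 * f 0 - ∑ k ∈ range (n + 1), f k := by
  rw [eq_sub_iff_add_eq, ← sum_add_distrib, sum_eq_single 0 (fun k _ hk => by simp [hk])
    (fun h => absurd (mem_range.2 (succ_pos n)) h)]
  simp only [↓reduceIte, mul_one]
  ring

def gapProd (S : Finset ℕ) (k : ℕ) : ℝ := ∏ i ∈ S.erase k, |(k : ℝ) - i|

theorem gapProd_pos (S : Finset ℕ) (k : ℕ) : 0 < gapProd S k :=
  prod_pos fun i hi => abs_pos.2 <| sub_ne_zero.2 <| by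
    exact_mod_cast (ne_of_mem_erase hi).symm

theorem prod_range_abs_sub_self (k : ℕ) : ∏ i ∈ range k, |(k : ℝ) - i| = k ! := by
  rw [← descFactorial_self, descFactorial_eq_prod_range, cast_prod]
  refine prod_congr rfl fun i hi => ?_
  have hik : i ≤ k := (mem_range.1 hi).le
  rw [cast_sub hik, abs_of_nonneg (sub_nonneg.2 (by exact_mod_cast hik))]

theorem gapProd_range (N : ℕ) {k : ℕ} (hk : k ≤ N) :
    gapProd (range (N + 1)) k = k ! * (N - k)! := by
  induction N, hk using Nat.le_induction with
  | base => simp [gapProd, range_add_one, prod_range_abs_sub_self]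
  | succ N hkN ih =>
    rw [gapProd, range_add_one, erase_insert_of_ne (by omega), prod_insert (by simp), ← gapProd,
      ih, (by omega : N + 1 - k = N - k + 1), factorial_succ]
    rw [abs_sub_comm, abs_of_nonneg (sub_nonneg.2 (by exact_mod_cast (by omega : k ≤ N + 1)))]
    push_cast [Nat.cast_sub hkN]
    ring

theorem choose_mul_abs_prod_sdiff_sub {N k : ℕ} {S : Finset ℕ}
    (hS : S ⊆ range (N + 1)) (hk : k ∈ S) :
    N.choose k * |∏ i ∈ range (N + 1) \ S, ((k : ℝ) - i)| = N ! / gapProd S k := by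
  have hsplit : (range (N + 1)).erase k \ S.erase k = range (N + 1) \ S := by
    ext i; simp only [mem_sdiff, mem_erase]; grind
  have hkN : k ≤ N := Nat.lt_succ_iff.1 (mem_range.1 (hS hk))
  rw [eq_div_iff (gapProd_pos S k).ne', abs_prod, mul_assoc, gapProd, ← hsplit,
    prod_sdiff (erase_subset_erase k hS), ← gapProd, gapProd_range N hkN, ← mul_assoc]
  exact_mod_cast choose_mul_factorial_mul_factorial hkN

def dualWitness (N : ℕ) (S : Finset ℕ) (c : ℝ) (k : ℕ) : ℝ :=
  (-1) ^ k * (c * ∏ i ∈ range (N + 1) \ S, ((k : ℝ) - i))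

section dualWitness

variable {N : ℕ} {S : Finset ℕ} (c : ℝ)

theorem sum_choose_mul_dualWitness (hS : S ⊆ range (N + 1)) (hcard : 2 ≤ #S) :
    ∑ k ∈ range (N + 1), (N.choose k : ℝ) * dualWitness N S c k = 0 := by
  have hle : #S ≤ N + 1 := card_range (N + 1) ▸ card_le_card hS
  have h := sum_range_neg_one_pow_mul_choose_mul_prod_sub_eq_zero (range (N + 1) \ S)
    (fun i : ℕ => (i : ℝ)) (n := N) (by rw [card_sdiff_of_subset hS, card_range]; omega)
  rw [← mul_zero c, ← h, mul_sum]
  exact sum_congr rfl fun k _ => by rw [dualWitness]; ring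

theorem choose_mul_abs_dualWitness {k : ℕ} (hS : S ⊆ range (N + 1)) (hk : k ∈ S) :
    (N.choose k : ℝ) * |dualWitness N S c k| = |c| * N ! / gapProd S k := by
  rw [dualWitness, abs_mul, abs_mul, abs_pow, abs_neg, abs_one, one_pow, one_mul, mul_left_comm,
    choose_mul_abs_prod_sdiff_sub hS hk, mul_div_assoc]

theorem sum_choose_mul_abs_dualWitness (hS : S ⊆ range (N + 1)) :
    ∑ k ∈ range (N + 1), (N.choose k : ℝ) * |dualWitness N S c k|
      = ∑ k ∈ S, |c| * N ! / gapProd S k := by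
  rw [← sum_subset hS fun k hk hkS => by
    simp [dualWitness, prod_eq_zero (f := fun i : ℕ => (k : ℝ) - i) (mem_sdiff.2 ⟨hk, hkS⟩)
      (sub_self _)]]
  exact sum_congr rfl fun k hk => choose_mul_abs_dualWitness c hS hk

theorem dualWitness_zero (hS : S ⊆ range (N + 1)) (h0 : 0 ∈ S)
    (hc : 0 ≤ c * (-1) ^ #(range (N + 1) \ S)) :
    dualWitness N S c 0 = |c| * N ! / gapProd S 0 := by
  have hnonneg : 0 ≤ dualWitness N S c 0 := by
    simp only [dualWitness, pow_zero, one_mul, CharP.cast_eq_zero, zero_sub, prod_neg,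
      ← mul_assoc]
    exact mul_nonneg hc (prod_nonneg fun _ _ => cast_nonneg _)
  rw [← choose_mul_abs_dualWitness c hS h0, choose_zero_right, cast_one, one_mul,
    abs_of_nonneg hnonneg]

end dualWitness

theorem gapProd_union_singleton {S : Finset ℕ} {a k : ℕ} (ha : a ∉ S) (hk : k ≠ a) :
    gapProd (S ∪ {a}) k = |(k : ℝ) - a| * gapProd S k := by
  rw [union_comm, ← insert_eq, gapProd, erase_insert_of_ne (Ne.symm hk),
    prod_insert (fun h => ha (mem_of_mem_erase h)), gapProd]

theorem gapProd_union_singleton_self {S : Finset ℕ} {a : ℕ} (ha : a ∉ S) :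
    gapProd (S ∪ {a}) a = ∏ i ∈ S, |(a : ℝ) - i| := by
  rw [union_comm, ← insert_eq, gapProd, erase_insert ha]

theorem gapProd_image_sq (s : Finset ℕ) (j : ℕ) :
    gapProd (s.image (· ^ 2)) (j ^ 2) = gapProd s j * ∏ l ∈ s.erase j, ((j : ℝ) + l) := by
  have hinj : Function.Injective (· ^ 2 : ℕ → ℕ) := Nat.pow_left_injective two_ne_zero
  rw [gapProd, ← image_erase hinj, prod_image hinj.injOn, gapProd, ← prod_mul_distrib]
  refine prod_congr rfl fun l _ => ?_
  rw [← abs_of_nonneg (by positivity : (0 : ℝ) ≤ j + l), ← abs_mul]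
  push_cast
  ring_nf

theorem factorial_sq_le_factorial_sub_mul_factorial_add {m j : ℕ} (hj : j ≤ m) :
    m ! ^ 2 ≤ (m - j)! * (m + j)! :=
  calc m ! ^ 2 = (m - j)! * m.descFactorial j * m ! := by rw [factorial_mul_descFactorial hj, sq]
    _ ≤ (m - j)! * (m ! * (m + 1) ^ j) := by
      rw [mul_assoc, mul_comm _ (m !)]
      gcongr
      exact (descFactorial_le_pow m j).trans (Nat.pow_le_pow_left (le_succ m) j)
    _ ≤ (m - j)! * (m + j)! := by gcongr; exact factorial_mul_pow_le_factorial

theorem two_mul_factorial_mul_prod_erase_add {m j : ℕ} (hj : 1 ≤ j) (hjm : j ≤ m) :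
    2 * j ! * ∏ l ∈ (range (m + 1)).erase j, (j + l) = (j + m)! := by
  obtain ⟨i, rfl⟩ : ∃ i, j = i + 1 := ⟨j - 1, by omega⟩
  have hfull := mul_prod_erase (range (m + 1)) (fun l => i + 1 + l) (a := i + 1)
    (mem_range.2 (by omega))
  rw [← ascFactorial_eq_prod_range] at hfull
  have hfact := factorial_mul_ascFactorial' (i + 1) (m + 1) (succ_pos i)
  rw [← hfull, (by omega : i + 1 + (m + 1) - 1 = i + 1 + m)] at hfact
  rw [← hfact, factorial_succ, add_tsub_cancel_right]
  ring

def squares (m : ℕ) : Finset ℕ := (range (m + 1)).image (· ^ 2)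

theorem two_notMem_squares (m : ℕ) : 2 ∉ squares m := by
  simp only [squares, mem_image, not_exists, not_and]
  intro i _ h
  rcases Nat.lt_or_ge i 2 with hi | hi
  · interval_cases i <;> simp at h
  · nlinarith

theorem card_squares_union_two (m : ℕ) : #(squares m ∪ {2}) = m + 2 := by
  rw [card_union_of_disjoint (disjoint_singleton_right.2 (two_notMem_squares m)), squares,
    card_image_of_injective _ (Nat.pow_left_injective two_ne_zero), card_range, card_singleton]

theorem squares_union_two_subset_range {m n : ℕ} (hm : m ^ 2 ≤ n) (hn : 2 ≤ n) :
    squares m ∪ {2} ⊆ range (n + 1) := by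
  intro k hk
  simp only [squares, mem_union, mem_image, mem_range, mem_singleton] at hk ⊢
  rcases hk with ⟨i, hi, rfl⟩ | rfl
  · have := Nat.pow_le_pow_left (Nat.lt_succ_iff.1 hi) 2
    omega
  · omega

theorem gapProd_squares_union_two_zero (m : ℕ) :
    gapProd (squares m ∪ {2}) 0 = 2 * m ! ^ 2 := by
  have hrange : gapProd (range (m + 1)) 0 = m ! := by simpa using gapProd_range m (zero_le m)
  have hprod : ∏ l ∈ (range (m + 1)).erase 0, ((0 : ℕ) + (l : ℝ)) = m ! := by
    rw [← hrange, gapProd]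
    simp
  have h := gapProd_image_sq (range (m + 1)) 0
  rw [zero_pow two_ne_zero, hprod, hrange] at h
  rw [gapProd_union_singleton (two_notMem_squares m) two_ne_zero.symm, squares, h]
  norm_num
  ring

theorem two_mul_gapProd_squares_union_two {m j : ℕ} (hj : 1 ≤ j) (hjm : j ≤ m) :
    2 * gapProd (squares m ∪ {2}) (j ^ 2) = |(j : ℝ) ^ 2 - 2| * ((m - j)! * (m + j)!) := by
  have hj2 : j ^ 2 ≠ 2 := fun h =>
    two_notMem_squares m (h ▸ mem_image_of_mem _ (by simpa using hjm))
  have hprod : (2 * j ! * ∏ l ∈ (range (m + 1)).erase j, ((j : ℝ) + l)) = (m + j)! := by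
    exact_mod_cast add_comm j m ▸ two_mul_factorial_mul_prod_erase_add hj hjm
  rw [gapProd_union_singleton (two_notMem_squares m) hj2, squares, gapProd_image_sq,
    gapProd_range m hjm, ← hprod]
  push_cast
  ring

theorem gapProd_squares_union_two_two (m : ℕ) :
    gapProd (squares m ∪ {2}) 2 = ∏ l ∈ range (m + 1), |2 - (l : ℝ) ^ 2| := by
  rw [gapProd_union_singleton_self (two_notMem_squares m), squares,
    prod_image (Nat.pow_left_injective two_ne_zero).injOn]
  push_cast
  rfl

theorem sq_le_two_mul_abs_sq_sub_two {j : ℕ} (hj : 1 ≤ j) :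
    (j : ℝ) ^ 2 ≤ 2 * |(j : ℝ) ^ 2 - 2| := by
  rcases hj.eq_or_lt with rfl | hj
  · norm_num
  · have : (2 : ℝ) ≤ j := by exact_mod_cast hj
    rw [abs_of_nonneg (by nlinarith)]
    nlinarith

/-- The factor `(m + 1) / (m - 1)` makes the induction go through: the step needs
`l² / (l² - 2) ≤ l (l - 1) / ((l + 1) (l - 2))`, whose product over `3 ≤ l ≤ m` telescopes
to `3 (m - 1) / (m + 1)`. -/
theorem sq_factorial_le_prod_range_abs_two_sub_sq {m : ℕ} (hm : 2 ≤ m) :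
    ((m : ℝ) + 1) * m ! ^ 2 ≤ 3 * (m - 1) * ∏ l ∈ range (m + 1), |2 - (l : ℝ) ^ 2| := by
  induction m, hm using Nat.le_induction with
  | base => norm_num [prod_range_succ, factorial]
  | succ m hm ih =>
    have hm' : (2 : ℝ) ≤ m := by exact_mod_cast hm
    have hprod : 0 ≤ ∏ l ∈ range (m + 1), |2 - (l : ℝ) ^ 2| := by positivity
    rw [prod_range_succ, factorial_succ, abs_sub_comm, abs_of_nonneg (by push_cast; nlinarith)]
    push_cast
    nlinarith [mul_le_mul_of_nonneg_left ih (by positivity : (0 : ℝ) ≤ (m + 1) * (m + 2)),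
      mul_nonneg hprod (by linarith : (0 : ℝ) ≤ m)]

theorem div_gapProd_squares_union_two_sq_le {m j : ℕ} (hj : 1 ≤ j) (hjm : j ≤ m) :
    2 * (m ! : ℝ) ^ 2 / gapProd (squares m ∪ {2}) (j ^ 2) ≤ 8 / j ^ 2 := by
  have hfact : (m ! : ℝ) ^ 2 ≤ (m - j)! * (m + j)! := by
    exact_mod_cast factorial_sq_le_factorial_sub_mul_factorial_add hjm
  have hj2 := sq_le_two_mul_abs_sq_sub_two hj
  have hG := two_mul_gapProd_squares_union_two hj hjm
  rw [div_le_div_iff₀ (gapProd_pos _ _) (by positivity)]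
  nlinarith [mul_le_mul_of_nonneg_left hfact (abs_nonneg ((j : ℝ) ^ 2 - 2)),
    mul_le_mul_of_nonneg_left hj2 (by positivity : (0 : ℝ) ≤ (m ! : ℝ) ^ 2)]

theorem div_gapProd_squares_union_two_two_le {m : ℕ} (hm : 2 ≤ m) :
    2 * (m ! : ℝ) ^ 2 / gapProd (squares m ∪ {2}) 2 ≤ 6 := by
  have h := sq_factorial_le_prod_range_abs_two_sub_sq hm
  have hprod : 0 ≤ ∏ l ∈ range (m + 1), |2 - (l : ℝ) ^ 2| := by positivity
  rw [div_le_iff₀ (gapProd_pos _ _), gapProd_squares_union_two_two]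
  nlinarith

theorem sum_div_gapProd_squares_union_two_le {m : ℕ} (hm : 2 ≤ m) :
    ∑ k ∈ squares m ∪ {2}, 2 * (m ! : ℝ) ^ 2 / gapProd (squares m ∪ {2}) k ≤ 23 := by
  set f := fun k => 2 * (m ! : ℝ) ^ 2 / gapProd (squares m ∪ {2}) k
  have hsquares : ∑ k ∈ squares m, f k = ∑ j ∈ range (m + 1), f (j ^ 2) :=
    sum_image (Nat.pow_left_injective two_ne_zero).injOn
  have hzero : f 0 = 1 := by
    simp only [f, gapProd_squares_union_two_zero]
    field_simp
  have hpos : ∑ j ∈ (range (m + 1)).erase 0, f (j ^ 2) ≤ 16 :=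
    calc ∑ j ∈ (range (m + 1)).erase 0, f (j ^ 2)
        ≤ ∑ j ∈ Ioo 0 (m + 1), 8 * ((j : ℝ) ^ 2)⁻¹ := by
          rw [(by ext; simp : (range (m + 1)).erase 0 = Ioo 0 (m + 1))]
          refine sum_le_sum fun j hj => ?_
          rw [mem_Ioo] at hj
          exact (div_gapProd_squares_union_two_sq_le hj.1 (by omega)).trans_eq
            (div_eq_mul_inv _ _)
      _ ≤ 8 * 2 := by
          rw [← mul_sum]
          gcongr
          simpa using sum_Ioo_inv_sq_le (α := ℝ) 0 (m + 1)
      _ = 16 := by norm_num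
  rw [sum_union (disjoint_singleton_right.2 (two_notMem_squares m)), sum_singleton, hsquares,
    ← add_sum_erase _ _ (mem_range.2 (succ_pos m)), zero_pow two_ne_zero, hzero]
  linarith [div_gapProd_squares_union_two_two_le hm]

theorem dual_polynomial_OR_ratio (n : ℕ) (hn : 9 ≤ n) :
    let m := Nat.sqrt n
    let S : Finset ℕ := ((Finset.range (m + 1)).image (fun i => i ^ 2)) ∪ {2}
    let P : ℝ → ℝ := fun x =>
      2 * (-1 : ℝ) ^ (n - m - 1) * ((Nat.factorial m : ℝ) ^ 2 / Nat.factorial n) *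
        ∏ i ∈ Finset.range (n + 1) \ S, (x - i)
    let Q : ℕ → ℝ := fun k => (-1 : ℝ) ^ k * P k
    let OR : ℕ → ℝ := fun k => if k = 0 then 1 else -1
    (∑ k ∈ Finset.range (n + 1), (n.choose k : ℝ) * Q k * OR k = 2 * Q 0) ∧
    (∑ k ∈ Finset.range (n + 1), (n.choose k : ℝ) * Q k * OR k = 2) ∧
    (∑ k ∈ Finset.range (n + 1), (n.choose k : ℝ) * |Q k|) /
      (∑ k ∈ Finset.range (n + 1), (n.choose k : ℝ) * Q k * OR k) < 14 := by
  intro m S P Q OR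
  set c : ℝ := 2 * (-1) ^ (n - m - 1) * ((m ! : ℝ) ^ 2 / n !)
  have hQ : Q = dualWitness n S c := rfl
  have hS : S = squares m ∪ {2} := rfl
  have hm : 2 ≤ m := Nat.le_sqrt.2 (by omega)
  have hSsub : S ⊆ range (n + 1) := squares_union_two_subset_range (Nat.sqrt_le' n) (by omega)
  have hcard : #S = m + 2 := card_squares_union_two m
  have hT : #(range (n + 1) \ S) = n - m - 1 := by
    rw [card_sdiff_of_subset hSsub, card_range, hcard]
    omega
  have hc : |c| * n ! = 2 * m ! ^ 2 := by
    simp only [c, abs_mul, abs_pow, abs_neg, abs_one, one_pow, abs_two, abs_div, Nat.abs_cast]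
    field_simp
  have hsign : 0 ≤ c * (-1) ^ #(range (n + 1) \ S) := by
    have : c * (-1) ^ (n - m - 1) = 2 * ((-1) ^ (n - m - 1)) ^ 2 * ((m ! : ℝ) ^ 2 / n !) := by
      ring
    rw [hT, this]
    positivity
  have hQ0 : Q 0 = 1 := by
    rw [hQ, dualWitness_zero c hSsub (by simp [S]) hsign, hc,
      hS, gapProd_squares_union_two_zero, div_self (by positivity)]
  have hOR : ∑ k ∈ range (n + 1), (n.choose k : ℝ) * Q k * OR k = 2 := by
    rw [sum_range_mul_ite_zero_one_neg_one (fun k => (n.choose k : ℝ) * Q k), hQ,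
      sum_choose_mul_dualWitness c hSsub (by omega), ← hQ, hQ0]
    simp
  refine ⟨by rw [hOR, hQ0]; norm_num, hOR, ?_⟩
  have hnorm : ∑ k ∈ range (n + 1), (n.choose k : ℝ) * |Q k| ≤ 23 := by
    rw [hQ, sum_choose_mul_abs_dualWitness c hSsub, hc, hS]
    exact sum_div_gapProd_squares_union_two_le hm
  rw [hOR]
  linarith
end

section
/- Let n ≥ 9, m = ⌊√n⌋, S = {i² : 0 ≤ i ≤ m} ∪ {2}, and P(x) = 2·(−1)^{n−m−1}·(m!²/n!)·∏_{i ∈ [n]∖S} (x − i). Define Q(k) = (−1)^k P(k). Then the unique symmetric multilinear polynomial q on {±1}ⁿ with q(x) = Q(|x|) (where |x| is the number of −1s in x) has pure high degree at least m + 1 > √n; i.e., q̂(S) = 0 for all |S| ≤ m. -/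
/-- ±1 value of a Boolean coordinate: `false ↦ 1`, `true ↦ -1`. -/
noncomputable def sgnR (b : Bool) : ℝ := if b then -1 else 1

/-- Fourier character χ_S on the Boolean cube. -/
noncomputable def chiR {n : ℕ} (S : Finset (Fin n)) (x : Fin n → Bool) : ℝ :=
  ∏ i ∈ S, sgnR (x i)

/-- Fourier coefficient of a function on the Boolean cube. -/
noncomputable def cubeCoeff {n : ℕ} (f : (Fin n → Bool) → ℝ) (S : Finset (Fin n)) : ℝ :=
  (∑ x : Fin n → Bool, f x * chiR S x) / 2 ^ n

/-!
Since `(-1)^|x| = χ_[n](x)`, the function `q` is a constant times `χ_[n]` times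
`∏_{j ∉ S} (|x| - j)`, a polynomial of degree `n - m - 1` in the Hamming weight `|x|`.
As `|x| = ∑ᵢ (1 - χ_{i}(x)) / 2`, each factor raises the Fourier degree by at most one, so the
product has Fourier degree at most `n - m - 1`. Multiplying by `χ_[n]` moves the coefficient at `T`
to the complement of `T`, hence every coefficient of `q` with `|T| ≤ m` vanishes.
-/

open Finset Nat

lemma sgnR_mul_self (b : Bool) : sgnR b * sgnR b = 1 := by
  cases b <;> simp [sgnR]

section Cube

variable {n : ℕ}

lemma chiR_eq_prod_univ (S : Finset (Fin n)) (x : Fin n → Bool) :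
    chiR S x = ∏ i, if i ∈ S then sgnR (x i) else 1 :=
  (Fintype.prod_ite_mem S _).symm

lemma chiR_singleton (i : Fin n) (x : Fin n → Bool) : chiR {i} x = sgnR (x i) :=
  prod_singleton _ _

lemma chiR_mul_chiR (S T : Finset (Fin n)) (x : Fin n → Bool) :
    chiR S x * chiR T x = chiR (symmDiff S T) x := by
  simp only [chiR_eq_prod_univ, ← prod_mul_distrib, mem_symmDiff]
  refine prod_congr rfl fun i _ => ?_
  by_cases hS : i ∈ S <;> by_cases hT : i ∈ T <;> simp [hS, hT, sgnR_mul_self]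

lemma chiR_univ_eq_neg_one_pow (x : Fin n → Bool) :
    chiR univ x = (-1 : ℝ) ^ #{i | x i = true} := by
  simp [chiR, sgnR, prod_ite]

lemma sum_chiR_eq_zero {U : Finset (Fin n)} (hU : U.Nonempty) :
    ∑ x : Fin n → Bool, chiR U x = 0 := by
  obtain ⟨i, hi⟩ := hU
  simp only [chiR_eq_prod_univ]
  rw [← Fintype.prod_sum fun i b => if i ∈ U then sgnR b else 1]
  exact prod_eq_zero (mem_univ i) (by simp [hi, sgnR])

lemma cubeCoeff_add (f g : (Fin n → Bool) → ℝ) (U : Finset (Fin n)) :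
    cubeCoeff (f + g) U = cubeCoeff f U + cubeCoeff g U := by
  simp [cubeCoeff, add_mul, sum_add_distrib, add_div]

lemma cubeCoeff_smul (c : ℝ) (f : (Fin n → Bool) → ℝ) (U : Finset (Fin n)) :
    cubeCoeff (c • f) U = c * cubeCoeff f U := by
  simp [cubeCoeff, mul_assoc, ← mul_sum, mul_div_assoc]

lemma cubeCoeff_chiR_mul (S : Finset (Fin n)) (f : (Fin n → Bool) → ℝ) (U : Finset (Fin n)) :
    cubeCoeff (chiR S * f) U = cubeCoeff f (symmDiff S U) := by
  simp only [cubeCoeff, Pi.mul_apply, ← chiR_mul_chiR]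
  congr 1
  exact sum_congr rfl fun x _ => by ring

def cubeDegreeLE (n d : ℕ) : Submodule ℝ ((Fin n → Bool) → ℝ) where
  carrier := {f | ∀ U : Finset (Fin n), d < #U → cubeCoeff f U = 0}
  add_mem' hf hg U hU := by rw [cubeCoeff_add, hf U hU, hg U hU, add_zero]
  zero_mem' U _ := by simp [cubeCoeff]
  smul_mem' c f hf U hU := by rw [cubeCoeff_smul, hf U hU, mul_zero]

lemma cubeDegreeLE_mono {d e : ℕ} (h : d ≤ e) : cubeDegreeLE n d ≤ cubeDegreeLE n e :=
  fun _ hf U hU => hf U (h.trans_lt hU)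

lemma const_mem_cubeDegreeLE_zero (c : ℝ) : (fun _ => c) ∈ cubeDegreeLE n 0 := fun U hU => by
  simp [cubeCoeff, ← mul_sum, sum_chiR_eq_zero (card_pos.mp hU)]

lemma chiR_mul_mem_cubeDegreeLE {d : ℕ} {f : (Fin n → Bool) → ℝ} (hf : f ∈ cubeDegreeLE n d)
    (S : Finset (Fin n)) : chiR S * f ∈ cubeDegreeLE n (d + #S) := fun U hU => by
  have : #U ≤ #(symmDiff S U) + #S :=
    (card_le_card_sdiff_add_card).trans (by gcongr; exact symmDiff_subset_sdiff')
  exact (cubeCoeff_chiR_mul S f U).trans (hf _ (by omega))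

lemma card_filter_eq_sum_chiR_singleton (x : Fin n → Bool) :
    (#{i | x i = true} : ℝ) = ∑ i, (1 - chiR {i} x) / 2 := by
  rw [card_filter]
  push_cast
  refine sum_congr rfl fun i _ => ?_
  cases h : x i <;> simp [chiR_singleton, sgnR, h]

lemma card_filter_mul_mem_cubeDegreeLE {d : ℕ} {f : (Fin n → Bool) → ℝ}
    (hf : f ∈ cubeDegreeLE n d) :
    (fun x => (#{i | x i = true} : ℝ) * f x) ∈ cubeDegreeLE n (d + 1) := by
  have hsplit : (fun x => (#{i | x i = true} : ℝ) * f x)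
      = ∑ i, (2⁻¹ : ℝ) • (f - chiR {i} * f) := by
    funext x
    simp only [card_filter_eq_sum_chiR_singleton, sum_mul, Finset.sum_apply, Pi.smul_apply,
      Pi.sub_apply, Pi.mul_apply, smul_eq_mul]
    exact sum_congr rfl fun i _ => by ring
  rw [hsplit]
  refine Submodule.sum_mem _ fun i _ => Submodule.smul_mem _ _ (Submodule.sub_mem _ ?_ ?_)
  · exact cubeDegreeLE_mono (Nat.le_succ d) hf
  · simpa using chiR_mul_mem_cubeDegreeLE hf {i}

lemma prod_card_filter_sub_mem_cubeDegreeLE (F : Finset ℕ) :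
    (fun x => ∏ j ∈ F, ((#{i | x i = true} : ℝ) - j)) ∈ cubeDegreeLE n #F := by
  classical
  induction F using Finset.induction_on with
  | empty => simpa using const_mem_cubeDegreeLE_zero (n := n) 1
  | @insert a F ha ih =>
    rw [card_insert_of_notMem ha]
    convert Submodule.sub_mem _ (card_filter_mul_mem_cubeDegreeLE ih)
      (cubeDegreeLE_mono (Nat.le_succ _) (Submodule.smul_mem _ (a : ℝ) ih)) using 1
    funext x
    simp only [prod_insert ha, Pi.sub_apply, Pi.smul_apply, smul_eq_mul]
    ring

lemma cubeCoeff_chiR_univ_mul_eq_zero {d : ℕ} {f : (Fin n → Bool) → ℝ}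
    (hf : f ∈ cubeDegreeLE n d) {T : Finset (Fin n)} (hT : #T + d < n) :
    cubeCoeff (chiR univ * f) T = 0 := by
  rw [cubeCoeff_chiR_mul]
  refine hf _ ?_
  rw [show symmDiff univ T = Tᶜ by ext; simp [mem_symmDiff], card_compl, Fintype.card_fin]
  omega

end Cube

lemma card_range_sdiff_squares_union_two {n m : ℕ} (hm : m * m ≤ n) (hn : 2 ≤ n) :
    #(range (n + 1) \ ((range (m + 1)).image (fun i => i ^ 2) ∪ {2})) = n - m - 1 := by
  have htwo : (2 : ℕ) ∉ (range (m + 1)).image (fun i => i ^ 2) := by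
    simp only [mem_image, not_exists, not_and]
    intro i _ h
    have : i < 2 := by nlinarith
    interval_cases i <;> omega
  have hsub : (range (m + 1)).image (fun i => i ^ 2) ∪ {2} ⊆ range (n + 1) := by
    refine union_subset (image_subset_iff.mpr fun i hi => ?_) (singleton_subset_iff.mpr ?_)
    · have : i ^ 2 ≤ m * m := by
        rw [sq]; exact Nat.mul_self_le_mul_self (Nat.lt_succ_iff.mp (mem_range.mp hi))
      exact mem_range.mpr (by omega)
    · exact mem_range.mpr (by omega)
  rw [card_sdiff_of_subset hsub, card_union_of_disjoint (disjoint_singleton_right.mpr htwo),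
    card_image_of_injective _ (Nat.pow_left_injective two_ne_zero), card_range, card_range,
    card_singleton]
  omega

theorem dual_polynomial_pure_high_degree (n : ℕ) (hn : 9 ≤ n) :
    let m := Nat.sqrt n
    let S : Finset ℕ := ((Finset.range (m + 1)).image (fun i => i ^ 2)) ∪ {2}
    let P : ℝ → ℝ := fun x =>
      2 * (-1 : ℝ) ^ (n - m - 1) * ((Nat.factorial m : ℝ) ^ 2 / Nat.factorial n) *
        ∏ i ∈ Finset.range (n + 1) \ S, (x - i)
    let Q : ℕ → ℝ := fun k => (-1 : ℝ) ^ k * P k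
    let q : (Fin n → Bool) → ℝ := fun x => Q (Finset.univ.filter (fun i => x i = true)).card
    (∀ T : Finset (Fin n), T.card ≤ m → cubeCoeff q T = 0) ∧ (m : ℝ) + 1 > Real.sqrt n := by
  intro m S P Q q
  refine ⟨fun T hT => ?_, Real.real_sqrt_lt_nat_sqrt_succ⟩
  have hm : m < n := Nat.sqrt_lt_self (by omega)
  have hF : #(range (n + 1) \ S) = n - m - 1 :=
    card_range_sdiff_squares_union_two (Nat.sqrt_le n) (by omega)
  have hq : q = (2 * (-1 : ℝ) ^ (n - m - 1) * ((m ! : ℝ) ^ 2 / n !)) •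
      (chiR univ * fun x => ∏ j ∈ range (n + 1) \ S, ((#{i | x i = true} : ℝ) - j)) := by
    funext x
    simp only [q, Q, P, ← chiR_univ_eq_neg_one_pow, Pi.smul_apply, Pi.mul_apply, smul_eq_mul]
    ring
  rw [hq, cubeCoeff_smul, cubeCoeff_chiR_univ_mul_eq_zero
    (prod_card_filter_sub_mem_cubeDegreeLE _) (by omega), mul_zero]
end
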